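/- For every facet F of I^n and every H_F ∈ K°_{n−1}(F), there exists H ∈ K°_n such that H_F = H ∩ F = H ∩ ∂I^n. -/

import Mathlib

open Set Function

noncomputable section

abbrev E (n : ℕ) := EuclideanSpace ℝ (Fin n)

/-- `I^d × {0}^{n-d}` inside `ℝ^n`. -/
def IcubeD (n d : ℕ) : Set (E n) :=
  {x | (∀ i : Fin n, (i : ℕ) < d → x i ∈ Icc (-1 : ℝ) 1) ∧
       ∀ i : Fin n, d ≤ (i : ℕ) → x i = 0}

/-- The cube `I^n = [-1,1]^n`. -/
def Icube (n : ℕ) : Set (E n) := IcubeD n n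

/-- `H^d_{ij}(a,b) = {x ∈ I^d × {0}^{n-d} : a·x_i ≥ b·x_j}`. -/
def HsetD (n d : ℕ) (i j : Fin n) (a b : ℝ) : Set (E n) :=
  {x ∈ IcubeD n d | b * x j ≤ a * x i}

def Hset (n : ℕ) (i j : Fin n) (a b : ℝ) : Set (E n) := HsetD n n i j a b

/-- The family `ℋ^d` of the sets `H^d_{ij}(a,b)`, `a, b ∈ {-1,1}`. -/
def HfamD (n d : ℕ) : Set (Set (E n)) :=
  {H | ∃ i j : Fin n, (i : ℕ) < d ∧ (j : ℕ) < d ∧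
      ∃ a b : ℝ, (a = 1 ∨ a = -1) ∧ (b = 1 ∨ b = -1) ∧ H = HsetD n d i j a b}

def Hfam (n : ℕ) : Set (Set (E n)) := HfamD n n

/-- Fundamental subsets of `ℋ^d`. -/
def IsFundSubsetD (n d : ℕ) (S : Set (Set (E n))) : Prop :=
  S ⊆ HfamD n d ∧
  ∀ i j : Fin n, (i : ℕ) < d → (j : ℕ) < d → i ≤ j →
    (HsetD n d i j 1 (-1) ∈ S ∨ HsetD n d i j (-1) 1 ∈ S) ∧
    (HsetD n d i j 1 1 ∈ S ∨ HsetD n d i j (-1) (-1) ∈ S)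

def IsFundSubset (n : ℕ) (S : Set (Set (E n))) : Prop := IsFundSubsetD n n S

/-- `K°_d` (realized inside `ℝ^n` on the slice `I^d × {0}^{n-d}`). -/
def KoD (n d : ℕ) : Set (Set (E n)) :=
  {K | ∃ S, IsFundSubsetD n d S ∧ K = ⋂₀ S}

/-- `K°_n`. -/
def Ko (n : ℕ) : Set (Set (E n)) := KoD n n

/-- Symmetries of the cube `I^n`. -/
def SymI (n : ℕ) (γ : E n → E n) : Prop :=
  Isometry γ ∧ Surjective γ ∧ γ '' Icube n = Icube n

/-- Conformal affine maps `x ↦ λ U x + v`, `λ > 0`, `U ∈ O(n)`. -/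
def ConfAffine (n : ℕ) (L : E n → E n) : Prop :=
  ∃ (c : ℝ) (U : E n ≃ₗᵢ[ℝ] E n) (v : E n), 0 < c ∧ ∀ x, L x = c • U x + v

/-- `d`-dimensional cubes in `ℝ^n` (for `d ≥ 1`). -/
def IsCube (n d : ℕ) (C : Set (E n)) : Prop :=
  ∃ L : E n → E n, ConfAffine n L ∧ L '' C = IcubeD n d

/-- `K°_d(C)` for a `d`-dimensional cube `C` (with `K°_0(C) = {C}`). -/
def KoCube (n d : ℕ) (C : Set (E n)) : Set (Set (E n)) :=
  {K | (d = 0 ∧ K = C) ∨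
       (1 ≤ d ∧ ∃ L : E n → E n, ConfAffine n L ∧ L '' C = IcubeD n d ∧
          ∃ H ∈ KoD n d, K = L ⁻¹' H)}

/-- Faces of `I^d × {0}^{n-d}` of dimension `e`. -/
def IsFaceD (n d : ℕ) (f : Set (E n)) (e : ℕ) : Prop :=
  ∃ J : Fin n → Set ℝ,
    (∀ i : Fin n, (i : ℕ) < d → (J i = Icc (-1 : ℝ) 1 ∨ J i = {-1} ∨ J i = {1})) ∧
    (∀ i : Fin n, d ≤ (i : ℕ) → J i = {0}) ∧
    {i : Fin n | J i = Icc (-1 : ℝ) 1}.ncard = e ∧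
    f = {x : E n | ∀ i, x i ∈ J i}

/-- `c` is a face of dimension `e` of the `d`-dimensional cube `C`. -/
def FaceOfCubeDim (n d : ℕ) (C c : Set (E n)) (e : ℕ) : Prop :=
  ∃ L : E n → E n, ConfAffine n L ∧ L '' C = IcubeD n d ∧
    ∃ f, IsFaceD n d f e ∧ c = L ⁻¹' f

/-- The symmetric decomposition `K_d(C)` of a `d`-dimensional cube `C`. -/
def KcalCube (n d : ℕ) (C : Set (E n)) : Set (Set (E n)) :=
  {K | ∃ c e, FaceOfCubeDim n d C c e ∧ K ∈ KoCube n e c}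

/-- `∂K_d(C)`: union of the `K°` of the proper faces of `C`. -/
def KcalBdCube (n d : ℕ) (C : Set (E n)) : Set (Set (E n)) :=
  {K | ∃ c e, FaceOfCubeDim n d C c e ∧ e < d ∧ K ∈ KoCube n e c}

/-- The symmetric decomposition `K_n` of `I^n`. -/
def Kcal (n : ℕ) : Set (Set (E n)) :=
  {K | ∃ c e, IsFaceD n n c e ∧ K ∈ KoCube n e c}

/-- `∂K_n`: union of the `K°` of the proper faces of `I^n`. -/
def KcalBdI (n : ℕ) : Set (Set (E n)) :=
  {K | ∃ c e, IsFaceD n n c e ∧ e < n ∧ K ∈ KoCube n e c}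

/-- `∂_∘ C`: the union of the proper faces of the `d`-cube `C`. -/
def cellBd (n d : ℕ) (C : Set (E n)) : Set (E n) :=
  ⋃₀ {c | ∃ e, e < d ∧ FaceOfCubeDim n d C c e}

/-- The cone `Cone(x, Y) = {x + t (y - x) : y ∈ Y, t ∈ [0,1]}`. -/
def Cone (n : ℕ) (x : E n) (Y : Set (E n)) : Set (E n) :=
  {z | ∃ y ∈ Y, ∃ t : ℝ, t ∈ Icc (0 : ℝ) 1 ∧ z = x + t • (y - x)}

/-- Standard orthotopes `∏ [-a_i, a_i]`. -/
def StdOrtho (n : ℕ) (a : Fin n → ℝ) : Set (E n) :=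
  {x | ∀ i, x i ∈ Icc (-(a i)) (a i)}

/-- `n`-dimensional orthotopes in `ℝ^n`. -/
def IsOrtho (n : ℕ) (R : Set (E n)) : Prop :=
  ∃ (L : E n → E n) (a : Fin n → ℝ), Isometry L ∧ Surjective L ∧
    (∀ i, 0 < a i) ∧ L '' R = StdOrtho n a

/-- The cubic-stretching of the standard orthotope `∏ [-a_i, a_i]`. -/
def stretch (n : ℕ) (a : Fin n → ℝ) : E n → E n :=
  fun x => WithLp.toLp 2 fun i => x i / a i

/-- `K_n(R)` for an `n`-dimensional orthotope `R`. -/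
def KcalOrtho (n : ℕ) (R : Set (E n)) : Set (Set (E n)) :=
  {K | ∃ (L : E n → E n) (a : Fin n → ℝ), Isometry L ∧ Surjective L ∧
      (∀ i, 0 < a i) ∧ L '' R = StdOrtho n a ∧
      ∃ H ∈ Kcal n, K = L ⁻¹' (stretch n a ⁻¹' H)}

/-- Faces of an `n`-dimensional orthotope `R`. -/
def FaceOfOrtho (n : ℕ) (R c : Set (E n)) : Prop :=
  ∃ (L : E n → E n) (a : Fin n → ℝ), Isometry L ∧ Surjective L ∧
    (∀ i, 0 < a i) ∧ L '' R = StdOrtho n a ∧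
    ∃ f e, IsFaceD n n f e ∧ c = L ⁻¹' (stretch n a ⁻¹' f)

/-- The center `x_α` of the subcube `C_α`. -/
def xalpha (n l : ℕ) (α : Fin n → ℕ) : E n :=
  WithLp.toLp 2 fun i => (2 * (α i : ℝ) + 1 - (l : ℝ)) / (l : ℝ)

/-- `T_α(x) = l (x - x_α)`, mapping `C_α` onto `I^n`. -/
def Talpha (n l : ℕ) (α : Fin n → ℕ) : E n → E n :=
  fun x => (l : ℝ) • (x - xalpha n l α)

/-- The refined symmetric decomposition `K_{n,l}`. -/
def Knl (n l : ℕ) : Set (Set (E n)) :=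
  {K | ∃ α : Fin n → ℕ, (∀ i, α i < l) ∧ ∃ H ∈ Kcal n, K = Talpha n l α ⁻¹' H}

/-- `Γ` is a group of surjective isometries of `ℝ^n`. -/
def IsIsomGroup (n : ℕ) (Γ : Set (E n → E n)) : Prop :=
  (∀ γ ∈ Γ, Isometry γ ∧ Surjective γ) ∧ id ∈ Γ ∧
  (∀ γ ∈ Γ, ∀ γ' ∈ Γ, γ ∘ γ' ∈ Γ) ∧
  ∀ γ ∈ Γ, ∃ γ' ∈ Γ, γ ∘ γ' = id ∧ γ' ∘ γ = id

/-- `D` is a fundamental domain of `Γ`. -/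
def IsFundDom (n : ℕ) (Γ : Set (E n → E n)) (D : Set (E n)) : Prop :=
  (∃ U : Set (E n), U.Nonempty ∧ IsOpen U ∧ IsConnected U ∧ D = closure U) ∧
  (⋃ γ ∈ Γ, γ '' D) = univ ∧
  (∀ x : E n, ∃ V : Set (E n), x ∈ V ∧ IsOpen V ∧
    {γ ∈ Γ | ((γ '' D) ∩ V).Nonempty}.Finite) ∧
  ∀ γ ∈ Γ, γ ≠ id → interior D ∩ interior (γ '' D) = ∅

/-!
A conformal affine map `L = c • U + v` carrying the facet `x_k = ε` onto `I^{n-1} × {0}` is forced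
to be a signed permutation of coordinates: the parallelogram law at antipodal vertices of the two
cubes gives `c = 1` and makes `L` send the centre of the facet to `0`, and `U⁻¹ e_j` is half the
difference of two vertices of the facet, hence a signed basis vector. So the half-spaces defining
`H_F` pull back to half-spaces `H^n_{ij}(±1, ±1)` with `i, j ≠ k`. Adding the half-spaces
`ε x_k ≥ ± x_i` completes them to a fundamental subset; these cut out the cone over the facet
from the centre of `I^n`, so the resulting `H` meets `∂I^n` only inside the facet.
-/

namespace CubeFacet

variable {n d : ℕ}

lemma abs_eq_one_iff {a : ℝ} : |a| = 1 ↔ a = 1 ∨ a = -1 := abs_eq zero_le_one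

lemma HsetD_swap (i j : Fin n) (a b : ℝ) : HsetD n d i j a b = HsetD n d j i (-b) (-a) := by
  ext x
  simp only [HsetD, mem_ofPred_eq, neg_mul, neg_le_neg_iff]

lemma HsetD_mem_HfamD {i j : Fin n} (hi : (i : ℕ) < d) (hj : (j : ℕ) < d) {a b : ℝ}
    (ha : |a| = 1) (hb : |b| = 1) : HsetD n d i j a b ∈ HfamD n d :=
  ⟨i, j, hi, hj, a, b, abs_eq_one_iff.1 ha, abs_eq_one_iff.1 hb, rfl⟩

/-- The product `a * b` of the signs of `H_{ij}(a,b)` is its type: a fundamental subset contains,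
for every pair `i, j`, a half-space of each of the two types. -/
def HasBothTypes (d : ℕ) (S : Set (Set (E n))) (i j : Fin n) : Prop :=
  ∀ t : ℝ, |t| = 1 → ∃ a b : ℝ, |a| = 1 ∧ |b| = 1 ∧ a * b = t ∧ HsetD n d i j a b ∈ S

section FundSubset

variable {S T : Set (Set (E n))} {i j : Fin n}

lemma hasBothTypes_iff :
    HasBothTypes d S i j ↔
      (HsetD n d i j 1 (-1) ∈ S ∨ HsetD n d i j (-1) 1 ∈ S) ∧
      (HsetD n d i j 1 1 ∈ S ∨ HsetD n d i j (-1) (-1) ∈ S) := by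
  simp only [HasBothTypes, abs_eq_one_iff]
  constructor
  · intro h
    obtain ⟨a, b, ha, hb, hab, hS⟩ := h (-1) (Or.inr rfl)
    obtain ⟨a', b', ha', hb', hab', hS'⟩ := h 1 (Or.inl rfl)
    constructor
    · rcases ha with rfl | rfl <;> rcases hb with rfl | rfl <;> norm_num at hab <;> simp [hS]
    · rcases ha' with rfl | rfl <;> rcases hb' with rfl | rfl <;> norm_num at hab' <;> simp [hS']
  · rintro ⟨hm, hp⟩ t (rfl | rfl)
    · rcases hp with hS | hS
      exacts [⟨1, 1, by norm_num, by norm_num, by norm_num, hS⟩,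
        ⟨-1, -1, by norm_num, by norm_num, by norm_num, hS⟩]
    · rcases hm with hS | hS
      exacts [⟨1, -1, by norm_num, by norm_num, by norm_num, hS⟩,
        ⟨-1, 1, by norm_num, by norm_num, by norm_num, hS⟩]

lemma HasBothTypes.swap (h : HasBothTypes d S i j) : HasBothTypes d S j i := by
  intro t ht
  obtain ⟨a, b, ha, hb, rfl, hS⟩ := h t ht
  exact ⟨-b, -a, by rwa [abs_neg], by rwa [abs_neg], by ring, HsetD_swap i j a b ▸ hS⟩

lemma HasBothTypes.mono (h : HasBothTypes d S i j) (hST : S ⊆ T) : HasBothTypes d T i j :=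
  fun t ht =>
  let ⟨a, b, ha, hb, hab, hS⟩ := h t ht
  ⟨a, b, ha, hb, hab, hST hS⟩

lemma isFundSubsetD_iff :
    IsFundSubsetD n d S ↔
      S ⊆ HfamD n d ∧ ∀ i j : Fin n, (i : ℕ) < d → (j : ℕ) < d → HasBothTypes d S i j := by
  refine and_congr_right fun _ => ⟨fun h i j hi hj => ?_, fun h i j hi hj _ => ?_⟩
  · rcases le_total i j with hij | hij
    · exact hasBothTypes_iff.2 (h i j hi hj hij)
    · exact (hasBothTypes_iff.2 (h j i hj hi hij)).swap
  · exact hasBothTypes_iff.1 (h i j hi hj)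

lemma sInter_subset_IcubeD (hS : IsFundSubsetD n d S) (hd : 0 < d) (hdn : d ≤ n) :
    ⋂₀ S ⊆ IcubeD n d := by
  have h0 : ((⟨0, by omega⟩ : Fin n) : ℕ) < d := hd
  obtain ⟨a, b, -, -, -, hmem⟩ := (isFundSubsetD_iff.1 hS).2 _ _ h0 h0 1 abs_one
  exact (sInter_subset_of_mem hmem).trans fun _ hx => hx.1

end FundSubset

def coordCube (s : Finset (Fin n)) : Set (E n) :=
  {y | (∀ i ∈ s, |y i| ≤ 1) ∧ ∀ i ∉ s, y i = 0}

def IsCubeVertex (s : Finset (Fin n)) (y : E n) : Prop :=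
  (∀ i ∈ s, |y i| = 1) ∧ ∀ i ∉ s, y i = 0

section CoordCube

variable {s t : Finset (Fin n)} {y : E n}

lemma norm_sq_eq_sum_of_forall_notMem (hy : ∀ i ∉ s, y i = 0) : ‖y‖ ^ 2 = ∑ i ∈ s, y i ^ 2 := by
  rw [EuclideanSpace.real_norm_sq_eq]
  exact (Finset.sum_subset (Finset.subset_univ s) fun i _ hi => by simp [hy i hi]).symm

lemma norm_sq_le_card_of_mem_coordCube (hy : y ∈ coordCube s) : ‖y‖ ^ 2 ≤ s.card := by
  rw [norm_sq_eq_sum_of_forall_notMem hy.2]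
  calc ∑ i ∈ s, y i ^ 2 ≤ ∑ _i ∈ s, (1 : ℝ) :=
        Finset.sum_le_sum fun i hi => (sq_le_one_iff_abs_le_one _).2 (hy.1 i hi)
    _ = s.card := by simp

lemma IsCubeVertex.mem_coordCube (hy : IsCubeVertex s y) : y ∈ coordCube s :=
  ⟨fun i hi => (hy.1 i hi).le, hy.2⟩

lemma IsCubeVertex.norm_sq (hy : IsCubeVertex s y) : ‖y‖ ^ 2 = s.card := by
  rw [norm_sq_eq_sum_of_forall_notMem hy.2,
    Finset.sum_congr rfl fun i hi => by rw [← sq_abs, hy.1 i hi]]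
  simp

lemma IsCubeVertex.neg (hy : IsCubeVertex s y) : IsCubeVertex s (-y) :=
  ⟨fun i hi => by simpa using hy.1 i hi, fun i hi => by simpa using hy.2 i hi⟩

lemma isCubeVertex_of_norm_sq_eq_card (hy : y ∈ coordCube s) (h : ‖y‖ ^ 2 = s.card) :
    IsCubeVertex s y := by
  have hnonneg : ∀ i ∈ s, 0 ≤ 1 - y i ^ 2 := fun i hi => by
    rw [sub_nonneg]; exact (sq_le_one_iff_abs_le_one _).2 (hy.1 i hi)
  have hsum : ∑ i ∈ s, (1 - y i ^ 2) = 0 := by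
    rw [Finset.sum_sub_distrib, ← norm_sq_eq_sum_of_forall_notMem hy.2, h]; simp
  refine ⟨fun i hi => ?_, hy.2⟩
  have hi := (Finset.sum_eq_zero_iff_of_nonneg hnonneg).1 hsum i hi
  rw [← pow_eq_one_iff_of_nonneg (abs_nonneg _) two_ne_zero, sq_abs]
  linarith

lemma exists_isCubeVertex (s : Finset (Fin n)) :
    ∃ y : E n, IsCubeVertex s y ∧ ∀ i ∈ s, y i = 1 :=
  ⟨WithLp.toLp 2 fun i => if i ∈ s then 1 else 0,
    ⟨fun i hi => by simp [hi], fun i hi => by simp [hi]⟩, fun i hi => by simp [hi]⟩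

lemma IsCubeVertex.sub_two_smul_single (hy : IsCubeVertex s y) {j : Fin n} (hj : j ∈ s)
    (hyj : y j = 1) : IsCubeVertex s (y - (2 : ℝ) • EuclideanSpace.single j 1) := by
  refine ⟨fun i hi => ?_, fun i hi => ?_⟩
  · by_cases hij : i = j
    · subst hij; norm_num [hyj]
    · simpa [hij] using hy.1 i hi
  · have hij : i ≠ j := fun h => hi (h ▸ hj)
    simpa [hij] using hy.2 i hi

lemma exists_eq_single_of_norm_eq_one {w : E n} (hw : ∀ i, w i = 0 ∨ |w i| = 1)
    (h : ‖w‖ = 1) : ∃ i, |w i| = 1 ∧ w = EuclideanSpace.single i (w i) := by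
  obtain ⟨i, hi⟩ : ∃ i, w i ≠ 0 := by
    by_contra! h0
    have : w = 0 := by ext i; simp [h0 i]
    simp [this] at h
  have hwi : |w i| = 1 := (hw i).resolve_left hi
  have hrest : ∑ l ∈ Finset.univ.erase i, w l ^ 2 = 0 := by
    have := Finset.sum_erase_add Finset.univ (fun l => w l ^ 2) (Finset.mem_univ i)
    rw [← EuclideanSpace.real_norm_sq_eq, h, ← sq_abs, hwi] at this
    linarith
  refine ⟨i, hwi, ?_⟩
  ext l
  by_cases hli : l = i
  · subst hli; simp
  · have := (Finset.sum_eq_zero_iff_of_nonneg fun l _ => sq_nonneg (w l)).1 hrest l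
      (Finset.mem_erase.2 ⟨hli, Finset.mem_univ l⟩)
    simpa [hli] using this

end CoordCube

section ConformalImage

variable {s t : Finset (Fin n)}

/-- The parallelogram law, applied to the images of two antipodal vertices of the source cube and
to the preimages of two antipodal vertices of the target cube, gives `‖v‖² + c² |s| ≤ |t|` and
`|t| + ‖v‖² ≤ c² |s|`. -/
lemma scale_eq_one_of_image_coordCube (hst : s.card = t.card) (ht : t.Nonempty) {c : ℝ}
    (hc : 0 < c) (U : E n ≃ₗᵢ[ℝ] E n) (v : E n)
    (h : (fun y => c • U y + v) '' coordCube s = coordCube t) : c = 1 ∧ v = 0 := by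
  have hmaps : ∀ y ∈ coordCube s, c • U y + v ∈ coordCube t := fun y hy =>
    h ▸ mem_image_of_mem _ hy
  have hsurj : ∀ q ∈ coordCube t, ∃ y ∈ coordCube s, c • U y + v = q := fun q hq => by
    rwa [← h] at hq
  have hnorm : ∀ y, ‖c • U y‖ ^ 2 = c ^ 2 * ‖y‖ ^ 2 := fun y => by
    rw [norm_smul, U.norm_map, Real.norm_of_nonneg hc.le, mul_pow]
  have hcard : (0 : ℝ) < t.card := by exact_mod_cast ht.card_pos
  obtain ⟨y, hy, -⟩ := exists_isCubeVertex s
  have h₁ := norm_sq_le_card_of_mem_coordCube (hmaps y hy.mem_coordCube)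
  have h₂ := norm_sq_le_card_of_mem_coordCube (hmaps (-y) hy.neg.mem_coordCube)
  rw [map_neg, smul_neg, neg_add_eq_sub, norm_sub_rev] at h₂
  have hsource := parallelogram_law_with_norm ℝ (c • U y) v
  rw [hnorm, hy.norm_sq] at hsource
  obtain ⟨q, hq, -⟩ := exists_isCubeVertex t
  obtain ⟨x, hx, hxq⟩ := hsurj q hq.mem_coordCube
  obtain ⟨x', hx', hxq'⟩ := hsurj (-q) hq.neg.mem_coordCube
  have h₃ : ‖q - v‖ ^ 2 ≤ c ^ 2 * s.card := by
    rw [← hxq, add_sub_cancel_right, hnorm]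
    exact mul_le_mul_of_nonneg_left (norm_sq_le_card_of_mem_coordCube hx) (sq_nonneg c)
  have h₄ : ‖q + v‖ ^ 2 ≤ c ^ 2 * s.card := by
    rw [← neg_neg q, ← hxq', neg_add, neg_add_cancel_right, norm_neg, hnorm]
    exact mul_le_mul_of_nonneg_left (norm_sq_le_card_of_mem_coordCube hx') (sq_nonneg c)
  have htarget := parallelogram_law_with_norm ℝ q v
  rw [hq.norm_sq] at htarget
  rw [← hst] at hcard h₁ h₂ htarget
  have hv : ‖v‖ ^ 2 ≤ 0 := by linarith
  have hc2 : c ^ 2 * s.card = 1 * s.card := by linarith [sq_nonneg ‖v‖]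
  refine ⟨?_, by simpa using hv⟩
  have := mul_right_cancel₀ hcard.ne' hc2
  nlinarith

lemma IsCubeVertex.exists_half_sub_eq_single {a b : E n} (ha : IsCubeVertex s a)
    (hb : IsCubeVertex s b) (h : ‖(2 : ℝ)⁻¹ • (a - b)‖ = 1) :
    ∃ i ∈ s, ∃ σ : ℝ, |σ| = 1 ∧ (2 : ℝ)⁻¹ • (a - b) = EuclideanSpace.single i σ := by
  have hcoord : ∀ i, ((2 : ℝ)⁻¹ • (a - b)) i = 0 ∨ |((2 : ℝ)⁻¹ • (a - b)) i| = 1 := by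
    intro i
    by_cases hi : i ∈ s
    · rcases abs_eq_one_iff.1 (ha.1 i hi) with h₁ | h₁ <;>
        rcases abs_eq_one_iff.1 (hb.1 i hi) with h₂ | h₂ <;> norm_num [h₁, h₂]
    · simp [ha.2 i hi, hb.2 i hi]
  obtain ⟨i, hi, hw⟩ := exists_eq_single_of_norm_eq_one hcoord h
  have his : i ∈ s := by
    by_contra his
    simp [ha.2 i his, hb.2 i his] at hi
  exact ⟨i, his, _, hi, hw⟩

/-- `U⁻¹ e_j` is half the difference of the preimages of two adjacent vertices of the target cube,
and these preimages are vertices of the source cube. -/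
lemma exists_symm_single_eq (hst : s.card = t.card) {U : E n ≃ₗᵢ[ℝ] E n}
    (h : U '' coordCube s = coordCube t) {j : Fin n} (hj : j ∈ t) :
    ∃ i ∈ s, ∃ σ : ℝ, |σ| = 1 ∧
      U.symm (EuclideanSpace.single j 1) = EuclideanSpace.single i σ := by
  have hvertex : ∀ q, IsCubeVertex t q → IsCubeVertex s (U.symm q) := by
    intro q hq
    obtain ⟨y, hy, rfl⟩ := h.symm ▸ hq.mem_coordCube
    rw [LinearIsometryEquiv.symm_apply_apply]
    refine isCubeVertex_of_norm_sq_eq_card hy ?_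
    rw [← U.norm_map, hq.norm_sq, hst]
  obtain ⟨q, hq, hqt⟩ := exists_isCubeVertex t
  have hw : U.symm (EuclideanSpace.single j 1) =
      (2 : ℝ)⁻¹ • (U.symm q - U.symm (q - (2 : ℝ) • EuclideanSpace.single j 1)) := by
    rw [← map_sub, sub_sub_cancel, map_smul, smul_smul]; norm_num
  obtain ⟨i, hi, σ, hσ, heq⟩ := (hvertex q hq).exists_half_sub_eq_single
    (hvertex _ (hq.sub_two_smul_single hj (hqt j hj))) (by rw [← hw]; simp)
  exact ⟨i, hi, σ, hσ, hw.trans heq⟩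

lemma exists_signed_perm_of_image_coordCube (hst : s.card = t.card) {U : E n ≃ₗᵢ[ℝ] E n}
    (h : U '' coordCube s = coordCube t) :
    ∃ (τ : Fin n → Fin n) (σ : Fin n → ℝ), Set.BijOn τ t s ∧ (∀ j ∈ t, |σ j| = 1) ∧
      ∀ y j, j ∈ t → U y j = σ j * y (τ j) := by
  have : ∀ j, ∃ i σ, j ∈ t → i ∈ s ∧ |σ| = 1 ∧
      U.symm (EuclideanSpace.single j 1) = EuclideanSpace.single i σ := by
    intro j
    by_cases hj : j ∈ t
    · obtain ⟨i, hi, σ, hσ, hU⟩ := exists_symm_single_eq hst h hj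
      exact ⟨i, σ, fun _ => ⟨hi, hσ, hU⟩⟩
    · exact ⟨j, 1, fun h => absurd h hj⟩
  choose τ σ hτσ using this
  have hcoord : ∀ y j, j ∈ t → U y j = σ j * y (τ j) := by
    intro y j hj
    calc U y j = inner ℝ (U y) (EuclideanSpace.single j 1) := by
          simp [EuclideanSpace.inner_single_right]
      _ = inner ℝ y (U.symm (EuclideanSpace.single j 1)) := U.inner_map_eq_flip _ _
      _ = σ j * y (τ j) := by
          rw [(hτσ j hj).2.2, EuclideanSpace.inner_single_right]; simp
  have hinj : Set.InjOn τ t := by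
    intro j₁ hj₁ j₂ hj₂ hτ
    by_contra hne
    have h₀ := U.symm.inner_map_map (EuclideanSpace.single j₁ 1) (EuclideanSpace.single j₂ 1)
    rw [(hτσ j₁ hj₁).2.2, (hτσ j₂ hj₂).2.2, hτ] at h₀
    simp only [EuclideanSpace.inner_single_left, Real.ringHom_apply, PiLp.single_eq_same, ne_eq,
      Ne.symm hne, not_false_eq_true, PiLp.single_eq_of_ne', mul_zero, mul_eq_zero] at h₀
    rcases h₀ with h₀ | h₀
    · simpa [h₀] using (hτσ j₁ hj₁).2.1
    · simpa [h₀] using (hτσ j₂ hj₂).2.1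
  have hmaps : Set.MapsTo τ t s := fun j hj => (hτσ j hj).1
  refine ⟨τ, σ, ⟨hmaps, hinj, Finset.surjOn_of_injOn_of_card_le τ hmaps hinj hst.le⟩,
    fun j hj => (hτσ j hj).2.1, hcoord⟩

end ConformalImage

def facet (k : Fin n) (ε : ℝ) : Set (E n) :=
  {x | x k = ε ∧ ∀ i ≠ k, |x i| ≤ 1}

section Facet

variable {k : Fin n} {ε : ℝ}

lemma mem_Icube_iff {x : E n} : x ∈ Icube n ↔ ∀ i, |x i| ≤ 1 := by
  simp [Icube, IcubeD, abs_le]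

lemma IcubeD_eq_coordCube (d : ℕ) :
    IcubeD n d = coordCube (Finset.univ.filter fun i : Fin n => (i : ℕ) < d) := by
  ext x
  simp [IcubeD, coordCube, abs_le]

lemma facet_eq_image_coordCube (k : Fin n) (ε : ℝ) :
    facet k ε = (· + EuclideanSpace.single k ε) '' coordCube {k}ᶜ := by
  rw [image_add_right]
  ext x
  simp +contextual [facet, coordCube, add_neg_eq_zero, and_comm]

lemma facet_subset_Icube (hε : |ε| = 1) : facet k ε ⊆ Icube n := fun x hx =>
  mem_Icube_iff.2 fun i => if h : i = k then by rw [h, hx.1, hε] else hx.2 i h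

lemma mem_frontier_Icube_iff {x : E n} :
    x ∈ frontier (Icube n) ↔ x ∈ Icube n ∧ ∃ i, |x i| = 1 := by
  set e := PiLp.homeomorph 2 fun _ : Fin n => ℝ
  have he : ∀ (x : E n) i, e x i = x i := fun _ _ => rfl
  have hpre : Icube n = e ⁻¹' univ.pi fun _ => Icc (-1) 1 := by
    ext x
    simp only [mem_preimage, mem_univ_pi, he, mem_Icube_iff, abs_le, mem_Icc]
  have hclosed : IsClosed (Icube n) := by
    rw [hpre]; exact (isClosed_set_pi fun _ _ => isClosed_Icc).preimage e.continuous
  have hint : interior (Icube n) = e ⁻¹' univ.pi fun _ => Ioo (-1) 1 := by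
    rw [hpre, ← e.preimage_interior, interior_pi_set finite_univ]
    simp only [interior_Icc]
  rw [hclosed.frontier_eq, mem_sdiff, hint]
  simp only [mem_preimage, mem_univ_pi, he, mem_Ioo, not_forall]
  refine and_congr_right fun hx => exists_congr fun i => ?_
  have hi := abs_le.1 (mem_Icube_iff.1 hx i)
  rw [abs_eq_one_iff]
  grind

lemma facet_subset_frontier (hε : |ε| = 1) : facet k ε ⊆ frontier (Icube n) := fun x hx =>
  mem_frontier_Icube_iff.2 ⟨facet_subset_Icube hε hx, k, by rw [hx.1, hε]⟩

lemma eq_facet_of_isFaceD (hn : 1 ≤ n) {F : Set (E n)} (hF : IsFaceD n n F (n - 1)) :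
    ∃ k ε, |ε| = 1 ∧ F = facet k ε := by
  obtain ⟨J, hJ, -, hcard, rfl⟩ := hF
  obtain ⟨k, hk⟩ : ∃ k, {i | J i = Icc (-1 : ℝ) 1}ᶜ = {k} := by
    rw [← Set.ncard_eq_one]
    have := Set.ncard_add_ncard_compl {i | J i = Icc (-1 : ℝ) 1}
    rw [hcard, Nat.card_eq_fintype_card, Fintype.card_fin] at this
    omega
  have hJi : ∀ i ≠ k, J i = Icc (-1) 1 := fun i hi => by
    by_contra h
    exact hi (hk ▸ h : i ∈ ({k} : Set (Fin n)))
  have hJk : J k ≠ Icc (-1) 1 := (hk.symm ▸ rfl : k ∈ {i | J i = Icc (-1 : ℝ) 1}ᶜ)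
  obtain ⟨ε, hε, hJk⟩ : ∃ ε : ℝ, |ε| = 1 ∧ J k = {ε} := by
    rcases hJ k k.isLt with h | h | h
    exacts [absurd h hJk, ⟨-1, by simp, h⟩, ⟨1, by simp, h⟩]
  refine ⟨k, ε, hε, ?_⟩
  ext x
  simp only [facet, mem_ofPred_eq]
  constructor
  · intro h
    exact ⟨by simpa [hJk] using h k, fun i hi => by simpa [hJi i hi, abs_le] using h i⟩
  · rintro ⟨hk, hi⟩ i
    by_cases hik : i = k
    · simp [hik, hJk, hk]
    · simpa [hJi i hik, abs_le] using hi i hik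

end Facet

/-- `⋂₀ coneFamily k ε` is the cone over `facet k ε` from the centre of `I^n`. -/
def coneFamily (k : Fin n) (ε : ℝ) : Set (Set (E n)) :=
  {H | ∃ i b, |b| = 1 ∧ H = Hset n k i ε b}

section ConeFamily

variable {k : Fin n} {ε : ℝ}

lemma coneFamily_subset_Hfam (hε : |ε| = 1) : coneFamily k ε ⊆ Hfam n := by
  rintro _ ⟨i, b, hb, rfl⟩
  exact HsetD_mem_HfamD k.isLt i.isLt hε hb

lemma facet_subset_sInter_coneFamily (hε : |ε| = 1) : facet k ε ⊆ ⋂₀ coneFamily k ε := by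
  rintro x hx _ ⟨i, b, hb, rfl⟩
  have hxI := facet_subset_Icube hε hx
  refine ⟨hxI, ?_⟩
  rw [hx.1, ← abs_mul_abs_self, hε, mul_one]
  calc b * x i ≤ |b * x i| := le_abs_self _
    _ ≤ 1 := by rw [abs_mul, hb, one_mul]; exact mem_Icube_iff.1 hxI i

lemma sInter_inter_frontier_subset_facet (hε : |ε| = 1) {S : Set (Set (E n))}
    (hS : coneFamily k ε ⊆ S) : ⋂₀ S ∩ frontier (Icube n) ⊆ facet k ε := by
  rintro x ⟨hxS, hx⟩
  obtain ⟨hxI, i, hi⟩ := mem_frontier_Icube_iff.1 hx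
  have hcone := (hxS _ (hS ⟨i, x i, hi, rfl⟩)).2
  rw [← abs_mul_abs_self, hi, one_mul] at hcone
  have hk : |ε * x k| ≤ 1 := by rw [abs_mul, hε, one_mul]; exact mem_Icube_iff.1 hxI k
  have hk' : ε * x k = 1 := le_antisymm ((le_abs_self _).trans hk) hcone
  refine ⟨?_, fun j _ => mem_Icube_iff.1 hxI j⟩
  calc x k = ε * ε * x k := by rw [← abs_mul_abs_self, hε, one_mul, one_mul]
    _ = ε := by rw [mul_assoc, hk', mul_one]

lemma hasBothTypes_coneFamily (hε : |ε| = 1) (j : Fin n) :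
    HasBothTypes n (coneFamily k ε) k j := by
  intro t ht
  refine ⟨ε, t * ε, hε, by rw [abs_mul, ht, hε, one_mul], ?_, j, t * ε, ?_, rfl⟩
  · rw [mul_left_comm, ← abs_mul_abs_self ε, hε]; ring
  · rw [abs_mul, ht, hε, one_mul]

lemma isFundSubset_of_coneFamily_subset (hε : |ε| = 1) {S : Set (Set (E n))}
    (hSH : S ⊆ Hfam n) (hS : coneFamily k ε ⊆ S)
    (h : ∀ i j, i ≠ k → j ≠ k → HasBothTypes n S i j) : IsFundSubset n S := by
  refine isFundSubsetD_iff.2 ⟨hSH, fun i j _ _ => ?_⟩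
  by_cases hi : i = k
  · exact hi ▸ (hasBothTypes_coneFamily hε j).mono hS
  by_cases hj : j = k
  · exact hj ▸ ((hasBothTypes_coneFamily hε i).mono hS).swap
  exact h i j hi hj

end ConeFamily

lemma sInter_inter_facet_eq_inter_frontier {k : Fin n} {ε : ℝ} (hε : |ε| = 1)
    {S : Set (Set (E n))} (hS : coneFamily k ε ⊆ S) :
    ⋂₀ S ∩ facet k ε = ⋂₀ S ∩ frontier (Icube n) :=
  subset_antisymm (fun _ hx => ⟨hx.1, facet_subset_frontier hε hx.2⟩)
    fun _ hx => ⟨hx.1, sInter_inter_frontier_subset_facet hε hS hx⟩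

lemma ConfAffine.injective {L : E n → E n} (hL : ConfAffine n L) : Injective L := by
  obtain ⟨c, U, v, hc, hL⟩ := hL
  intro x y h
  rw [hL, hL, add_left_inj] at h
  exact U.injective (smul_right_injective _ hc.ne' h)

lemma exists_signed_perm_of_image_facet (hn : 2 ≤ n) {k : Fin n} {ε : ℝ} {L : E n → E n}
    (hL : ConfAffine n L) (hLF : L '' facet k ε = IcubeD n (n - 1)) :
    ∃ (τ : Fin n → Fin n) (σ : Fin n → ℝ),
      (∀ j : Fin n, (j : ℕ) < n - 1 → τ j ≠ k ∧ |σ j| = 1) ∧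
      (∀ i ≠ k, ∃ j : Fin n, (j : ℕ) < n - 1 ∧ τ j = i) ∧
      ∀ x (j : Fin n), (j : ℕ) < n - 1 → L x j = σ j * x (τ j) := by
  obtain ⟨c, U, v, hc, hLeq⟩ := hL
  set p : E n := EuclideanSpace.single k ε
  set t := Finset.univ.filter fun i : Fin n => (i : ℕ) < n - 1
  have hst : ({k}ᶜ : Finset (Fin n)).card = t.card := by
    rw [Finset.card_compl, Fin.card_filter_val_lt]; simp
  have ht : t.Nonempty := ⟨⟨0, by omega⟩, by simp [t]; omega⟩
  have himage : (fun y => c • U y + (c • U p + v)) '' coordCube {k}ᶜ = coordCube t := by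
    rw [← IcubeD_eq_coordCube, ← hLF, facet_eq_image_coordCube, image_image]
    congr 1; funext y; rw [hLeq, map_add, smul_add, add_assoc]
  obtain ⟨rfl, hv⟩ := scale_eq_one_of_image_coordCube hst ht hc U _ himage
  simp only [one_smul] at himage hLeq hv
  rw [hv] at himage
  simp only [add_zero] at himage
  have hLx : ∀ x, L x = U (x - p) := fun x => by
    rw [hLeq, map_sub, eq_neg_of_add_eq_zero_right hv, sub_eq_add_neg]
  obtain ⟨τ, σ, hτ, hσ, hU⟩ := exists_signed_perm_of_image_coordCube hst himage
  have hτk : ∀ j ∈ t, τ j ≠ k := fun j hj => by simpa using hτ.mapsTo hj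
  refine ⟨τ, σ, fun j hj => ?_, fun i hi => ?_, fun x j hj => ?_⟩
  · exact ⟨hτk j (by simpa [t] using hj), hσ j (by simpa [t] using hj)⟩
  · obtain ⟨j, hj, rfl⟩ := hτ.surjOn (show i ∈ (({k}ᶜ : Finset (Fin n)) : Set (Fin n)) by simpa)
    exact ⟨j, by simpa [t] using hj, rfl⟩
  · have hj : j ∈ t := by simpa [t] using hj
    rw [hLx, hU _ j hj, PiLp.sub_apply, PiLp.single_apply, if_neg (hτk j hj), sub_zero]

/-- The half-spaces of `ℝ^n` that a map acting as `x ↦ (σ j x_{τ j})_{j < d}` pulls the members of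
`S₀` back to. -/
def pullbackFamily (d : ℕ) (S₀ : Set (Set (E n))) (τ : Fin n → Fin n) (σ : Fin n → ℝ) :
    Set (Set (E n)) :=
  {H | ∃ i j : Fin n, (i : ℕ) < d ∧ (j : ℕ) < d ∧ ∃ a b : ℝ, |a| = 1 ∧ |b| = 1 ∧
    HsetD n d i j a b ∈ S₀ ∧ H = Hset n (τ i) (τ j) (a * σ i) (b * σ j)}

section PullbackFamily

variable {S₀ : Set (Set (E n))} {τ : Fin n → Fin n} {σ : Fin n → ℝ}

lemma pullbackFamily_subset_Hfam (hσ : ∀ j : Fin n, (j : ℕ) < d → |σ j| = 1) :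
    pullbackFamily d S₀ τ σ ⊆ Hfam n := by
  rintro _ ⟨i, j, hi, hj, a, b, ha, hb, -, rfl⟩
  exact HsetD_mem_HfamD (τ i).isLt (τ j).isLt (by rw [abs_mul, ha, hσ i hi, one_mul])
    (by rw [abs_mul, hb, hσ j hj, one_mul])

lemma HasBothTypes.pullbackFamily {i j : Fin n} (h : HasBothTypes d S₀ i j) (hi : (i : ℕ) < d)
    (hj : (j : ℕ) < d) (hσi : |σ i| = 1) (hσj : |σ j| = 1) :
    HasBothTypes n (pullbackFamily d S₀ τ σ) (τ i) (τ j) := by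
  intro t ht
  obtain ⟨a, b, ha, hb, hab, hS⟩ := h (t * σ i * σ j) (by rw [abs_mul, abs_mul, ht, hσi, hσj]; ring)
  have hσi' : σ i * σ i = 1 := by rw [← abs_mul_abs_self, hσi, one_mul]
  have hσj' : σ j * σ j = 1 := by rw [← abs_mul_abs_self, hσj, one_mul]
  refine ⟨a * σ i, b * σ j, by rw [abs_mul, ha, hσi, one_mul], by rw [abs_mul, hb, hσj, one_mul],
    ?_, i, j, hi, hj, a, b, ha, hb, hS, rfl⟩
  linear_combination (σ i * σ j) * hab + (t * σ j * σ j) * hσi' + t * hσj'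

lemma mem_Hset_iff_mem_HsetD {L : E n → E n}
    (hL : ∀ x (j : Fin n), (j : ℕ) < d → L x j = σ j * x (τ j)) {x : E n} (hx : x ∈ Icube n)
    (hLx : L x ∈ IcubeD n d) {i j : Fin n} (hi : (i : ℕ) < d) (hj : (j : ℕ) < d) (a b : ℝ) :
    x ∈ Hset n (τ i) (τ j) (a * σ i) (b * σ j) ↔ L x ∈ HsetD n d i j a b := by
  have hx' : x ∈ IcubeD n n := hx
  simp only [Hset, HsetD, mem_sep_iff, hx', hLx, true_and, hL x i hi, hL x j hj, mul_assoc]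

lemma sInter_pullbackFamily_inter_eq_preimage (hS₀ : IsFundSubsetD n d S₀) (hd : 0 < d)
    (hdn : d ≤ n) {L : E n → E n} (hLinj : Injective L) {F : Set (E n)} (hF : F ⊆ Icube n)
    (hLF : L '' F = IcubeD n d) (hL : ∀ x (j : Fin n), (j : ℕ) < d → L x j = σ j * x (τ j)) :
    ⋂₀ pullbackFamily d S₀ τ σ ∩ F = L ⁻¹' ⋂₀ S₀ := by
  ext x
  constructor
  · rintro ⟨hx, hxF⟩ H hH
    have hLx : L x ∈ IcubeD n d := hLF ▸ mem_image_of_mem L hxF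
    obtain ⟨i, j, hi, hj, a, b, ha, hb, rfl⟩ := hS₀.1 hH
    exact (mem_Hset_iff_mem_HsetD hL (hF hxF) hLx hi hj a b).1
      (hx _ ⟨i, j, hi, hj, a, b, abs_eq_one_iff.2 ha, abs_eq_one_iff.2 hb, hH, rfl⟩)
  · intro hx
    have hLx : L x ∈ IcubeD n d := sInter_subset_IcubeD hS₀ hd hdn hx
    obtain ⟨y, hyF, hyx⟩ := hLF.symm ▸ hLx
    have hxF : x ∈ F := hLinj hyx ▸ hyF
    refine ⟨?_, hxF⟩
    rintro _ ⟨i, j, hi, hj, a, b, -, -, hS, rfl⟩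
    exact (mem_Hset_iff_mem_HsetD hL (hF hxF) hLx hi hj a b).2 (hx _ hS)

end PullbackFamily

lemma exists_isFundSubset_of_image_facet (hn : 2 ≤ n) {k : Fin n} {ε : ℝ} (hε : |ε| = 1)
    {L : E n → E n} (hL : ConfAffine n L) (hLF : L '' facet k ε = IcubeD n (n - 1))
    {S₀ : Set (Set (E n))} (hS₀ : IsFundSubsetD n (n - 1) S₀) :
    ∃ S, IsFundSubset n S ∧ coneFamily k ε ⊆ S ∧ L ⁻¹' ⋂₀ S₀ = ⋂₀ S ∩ facet k ε := by
  obtain ⟨τ, σ, hτσ, hsurj, hLτ⟩ := exists_signed_perm_of_image_facet hn hL hLF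
  refine ⟨pullbackFamily (n - 1) S₀ τ σ ∪ coneFamily k ε,
    isFundSubset_of_coneFamily_subset hε (union_subset (pullbackFamily_subset_Hfam
      fun j hj => (hτσ j hj).2) (coneFamily_subset_Hfam hε)) subset_union_right ?_,
    subset_union_right, ?_⟩
  · intro i j hi hj
    obtain ⟨i', hi', rfl⟩ := hsurj i hi
    obtain ⟨j', hj', rfl⟩ := hsurj j hj
    exact (((isFundSubsetD_iff.1 hS₀).2 i' j' hi' hj').pullbackFamily hi' hj'
      (hτσ i' hi').2 (hτσ j' hj').2).mono subset_union_left
  · rw [sInter_union, inter_right_comm,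
      inter_eq_left.2 (inter_subset_right.trans (facet_subset_sInter_coneFamily hε))]
    exact (sInter_pullbackFamily_inter_eq_preimage hS₀ (by omega) (by omega)
      (ConfAffine.injective hL) (facet_subset_Icube hε) hLF hLτ).symm

end CubeFacet

open CubeFacet in
/-- For every facet `F` of `I^n` and every `H_F ∈ K°_{n-1}(F)` there exists
`H ∈ K°_n` with `H_F = H ∩ F = H ∩ ∂I^n`. -/
theorem stmt7 (n : ℕ) (hn : 1 ≤ n) (F : Set (E n)) (hF : IsFaceD n n F (n - 1))
    (HF : Set (E n)) (hHF : HF ∈ KoCube n (n - 1) F) :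
    ∃ H ∈ Ko n, HF = H ∩ F ∧ HF = H ∩ frontier (Icube n) := by
  obtain ⟨k, ε, hε, rfl⟩ := eq_facet_of_isFaceD hn hF
  suffices ∃ S, IsFundSubset n S ∧ coneFamily k ε ⊆ S ∧ HF = ⋂₀ S ∩ facet k ε by
    obtain ⟨S, hS, hcone, hHF⟩ := this
    exact ⟨⋂₀ S, ⟨S, hS, rfl⟩, hHF, hHF.trans (sInter_inter_facet_eq_inter_frontier hε hcone)⟩
  rcases hHF with ⟨hn1, rfl⟩ | ⟨hn2, L, hL, hLF, H₀, ⟨S₀, hS₀, rfl⟩, rfl⟩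
  · refine ⟨coneFamily k ε, isFundSubset_of_coneFamily_subset hε (coneFamily_subset_Hfam hε)
      subset_rfl fun i _ hi _ => absurd (Fin.ext (by omega)) hi, subset_rfl,
      (inter_eq_right.2 (facet_subset_sInter_coneFamily hε)).symm⟩
  · exact exists_isFundSubset_of_image_facet (by omega) hε hL hLF hS₀
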